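/- Let 0 < x₁ < x₂ and 0 < y₁ < y₂ be real numbers. Then the mean distance to the origin over the rectangle [x₁,x₂] × [y₁,y₂], namely (1/((x₂−x₁)(y₂−y₁))) ∫_{x₁}^{x₂} ∫_{y₁}^{y₂} sqrt(x² + y²) dy dx, equals [x₂y₂·A(2x₂,2y₂) − x₂y₁·A(2y₁,2x₂) − x₁y₂·A(2y₂,2x₁) + x₁y₁·A(2x₁,2y₁)] / [x₂y₂ − x₂y₁ − x₁y₂ + x₁y₁], where A(Δ₁, Δ₂) = [Δ₂³ · arsinh(Δ₁/Δ₂) + Δ₁³ · arsinh(Δ₂/Δ₁) + 2 Δ₁ Δ₂ sqrt(Δ₁² + Δ₂²)] / (12 Δ₁ Δ₂). -/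

import Mathlib

/-- The function A(Δ₁, Δ₂) from Theorem 2 of the paper. -/
noncomputable def paretoA (Δ₁ Δ₂ : ℝ) : ℝ :=
  (Δ₂ ^ 3 * Real.arsinh (Δ₁ / Δ₂) + Δ₁ ^ 3 * Real.arsinh (Δ₂ / Δ₁) +
      2 * Δ₁ * Δ₂ * Real.sqrt (Δ₁ ^ 2 + Δ₂ ^ 2)) / (12 * Δ₁ * Δ₂)

/-! `hypotPrimitive₂` is an explicit function with `∂²/∂x∂y hypotPrimitive₂ = √(x² + y²)` on the
positive quadrant (`hypotPrimitive` being its `x`-derivative and a `y`-primitive of the integrand),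
so the double integral is the alternating sum of `hypotPrimitive₂` over the four corners of the
rectangle, and `x * y * paretoA (2 * x) (2 * y) = hypotPrimitive₂ x y`. -/

open Real

lemma sqrt_one_add_div_sq {a : ℝ} (ha : 0 < a) (b : ℝ) :
    √(1 + (b / a) ^ 2) = √(a ^ 2 + b ^ 2) / a := by
  rw [show 1 + (b / a) ^ 2 = (a ^ 2 + b ^ 2) / a ^ 2 by field_simp,
    sqrt_div' _ (by positivity), sqrt_sq ha.le]

lemma hasDerivAt_arsinh_div_const {c : ℝ} (hc : 0 < c) (y : ℝ) :
    HasDerivAt (fun y ↦ arsinh (y / c)) (1 / √(c ^ 2 + y ^ 2)) y := by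
  refine ((hasDerivAt_arsinh _).comp y ((hasDerivAt_id' y).div_const c)).congr_deriv ?_
  rw [sqrt_one_add_div_sq hc]
  have : 0 < √(c ^ 2 + y ^ 2) := by positivity
  field_simp

lemma hasDerivAt_arsinh_const_div (c : ℝ) {x : ℝ} (hx : 0 < x) :
    HasDerivAt (fun x ↦ arsinh (c / x)) (-c / (x * √(x ^ 2 + c ^ 2))) x := by
  refine ((hasDerivAt_arsinh _).comp x ((hasDerivAt_inv hx.ne').const_mul c)).congr_deriv ?_
  rw [← div_eq_mul_inv, sqrt_one_add_div_sq hx]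
  have : 0 < √(x ^ 2 + c ^ 2) := by positivity
  field_simp

noncomputable def hypotPrimitive (x y : ℝ) : ℝ :=
  (y * √(x ^ 2 + y ^ 2) + x ^ 2 * arsinh (y / x)) / 2

noncomputable def hypotPrimitive₂ (x y : ℝ) : ℝ :=
  (y ^ 3 * arsinh (x / y) + x ^ 3 * arsinh (y / x)) / 6 + x * y * √(x ^ 2 + y ^ 2) / 3

lemma hasDerivAt_hypotPrimitive {x : ℝ} (hx : 0 < x) (y : ℝ) :
    HasDerivAt (hypotPrimitive x) √(x ^ 2 + y ^ 2) y := by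
  have hr : 0 < √(x ^ 2 + y ^ 2) := by positivity
  have hsqrt := ((hasDerivAt_pow 2 y).const_add (x ^ 2)).sqrt (by positivity)
  refine ((((hasDerivAt_id' y).mul hsqrt).add
    ((hasDerivAt_arsinh_div_const hx y).const_mul (x ^ 2))).div_const 2).congr_deriv ?_
  field_simp
  rw [sq_sqrt (by positivity)]
  ring

lemma hasDerivAt_hypotPrimitive₂ {y : ℝ} (hy : 0 < y) {x : ℝ} (hx : 0 < x) :
    HasDerivAt (hypotPrimitive₂ · y) (hypotPrimitive x y) x := by
  have hr : 0 < √(x ^ 2 + y ^ 2) := by positivity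
  have hsqrt := ((hasDerivAt_pow 2 x).add_const (y ^ 2)).sqrt (by positivity)
  refine (((((hasDerivAt_arsinh_div_const hy x).const_mul (y ^ 3)).add
    ((hasDerivAt_pow 3 x).mul (hasDerivAt_arsinh_const_div y hx))).div_const 6).add
    ((((hasDerivAt_id' x).mul_const y).mul hsqrt).div_const 3)).congr_deriv ?_
  have hs : √(x ^ 2 + y ^ 2) ^ 2 = x ^ 2 + y ^ 2 := sq_sqrt (by positivity)
  rw [hypotPrimitive, add_comm (y ^ 2) (x ^ 2)]
  field_simp
  norm_num
  linear_combination (-6 * y) * hs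

lemma hypotPrimitive₂_comm (x y : ℝ) : hypotPrimitive₂ x y = hypotPrimitive₂ y x := by
  rw [hypotPrimitive₂, hypotPrimitive₂, add_comm (x ^ 2)]
  ring

lemma mul_mul_paretoA_two_mul {a b : ℝ} (ha : 0 < a) (hb : 0 < b) :
    a * b * paretoA (2 * a) (2 * b) = hypotPrimitive₂ a b := by
  have hsqrt : √((2 * a) ^ 2 + (2 * b) ^ 2) = 2 * √(a ^ 2 + b ^ 2) := by
    rw [show (2 * a) ^ 2 + (2 * b) ^ 2 = 2 ^ 2 * (a ^ 2 + b ^ 2) by ring,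
      sqrt_mul (by positivity), sqrt_sq zero_le_two]
  rw [paretoA, hypotPrimitive₂, hsqrt, mul_div_mul_left _ _ two_ne_zero,
    mul_div_mul_left _ _ two_ne_zero]
  field_simp
  ring

lemma integral_sqrt_sq_add_sq {x : ℝ} (hx : 0 < x) (y₁ y₂ : ℝ) :
    ∫ y in y₁..y₂, √(x ^ 2 + y ^ 2) = hypotPrimitive x y₂ - hypotPrimitive x y₁ :=
  intervalIntegral.integral_eq_sub_of_hasDerivAt (fun y _ ↦ hasDerivAt_hypotPrimitive hx y)
    ((by fun_prop : Continuous fun y : ℝ ↦ √(x ^ 2 + y ^ 2)).intervalIntegrable _ _)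

lemma integral_integral_sqrt_sq_add_sq {x₁ x₂ y₁ y₂ : ℝ} (hx₁ : 0 < x₁) (hx₂ : 0 < x₂)
    (hy₁ : 0 < y₁) (hy₂ : 0 < y₂) :
    ∫ x in x₁..x₂, ∫ y in y₁..y₂, √(x ^ 2 + y ^ 2) =
      hypotPrimitive₂ x₂ y₂ - hypotPrimitive₂ x₂ y₁ - hypotPrimitive₂ x₁ y₂ +
        hypotPrimitive₂ x₁ y₁ := by
  have hpos : ∀ x ∈ Set.uIcc x₁ x₂, 0 < x := fun x hx ↦
    lt_of_lt_of_le (lt_min hx₁ hx₂) hx.1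
  have hderiv : ∀ x ∈ Set.uIcc x₁ x₂,
      HasDerivAt (fun x ↦ hypotPrimitive₂ x y₂ - hypotPrimitive₂ x y₁)
        (∫ y in y₁..y₂, √(x ^ 2 + y ^ 2)) x := fun x hx ↦ by
    rw [integral_sqrt_sq_add_sq (hpos x hx)]
    exact (hasDerivAt_hypotPrimitive₂ hy₂ (hpos x hx)).sub
      (hasDerivAt_hypotPrimitive₂ hy₁ (hpos x hx))
  have hcont : Continuous fun x : ℝ ↦ ∫ y in y₁..y₂, √(x ^ 2 + y ^ 2) := by fun_prop
  rw [intervalIntegral.integral_eq_sub_of_hasDerivAt hderiv (hcont.intervalIntegrable _ _)]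
  ring

theorem stmt_9 (x₁ x₂ y₁ y₂ : ℝ)
    (hx₁ : 0 < x₁) (hx : x₁ < x₂) (hy₁ : 0 < y₁) (hy : y₁ < y₂) :
    (1 / ((x₂ - x₁) * (y₂ - y₁))) *
        ∫ x in x₁..x₂, ∫ y in y₁..y₂, Real.sqrt (x ^ 2 + y ^ 2)
      = (x₂ * y₂ * paretoA (2 * x₂) (2 * y₂) - x₂ * y₁ * paretoA (2 * y₁) (2 * x₂)
          - x₁ * y₂ * paretoA (2 * y₂) (2 * x₁) + x₁ * y₁ * paretoA (2 * x₁) (2 * y₁))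
        / (x₂ * y₂ - x₂ * y₁ - x₁ * y₂ + x₁ * y₁) := by
  have hx₂ : 0 < x₂ := hx₁.trans hx
  have hy₂ : 0 < y₂ := hy₁.trans hy
  rw [integral_integral_sqrt_sq_add_sq hx₁ hx₂ hy₁ hy₂, mul_comm x₂ y₁, mul_comm x₁ y₂,
    mul_mul_paretoA_two_mul hx₂ hy₂, mul_mul_paretoA_two_mul hy₁ hx₂,
    mul_mul_paretoA_two_mul hy₂ hx₁, mul_mul_paretoA_two_mul hx₁ hy₁,
    hypotPrimitive₂_comm y₁, hypotPrimitive₂_comm y₂,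
    show x₂ * y₂ - y₁ * x₂ - y₂ * x₁ + x₁ * y₁ = (x₂ - x₁) * (y₂ - y₁) by ring,
    one_div_mul_eq_div]
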